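/- arXiv:2602.23353 — 3 statements merged into one kernel-verified Lean document; each statement's English description precedes it below -/
import Mathlib

section
/- Let A ∈ ℝ^{n×d_a}, B ∈ ℝ^{n×d_b}, and d' ≤ min(d_a, d_b). Among pairs of matrices P ∈ ℝ^{d'×d_a}, Q ∈ ℝ^{d'×d_b} with orthonormal rows (PPᵀ = QQᵀ = I_{d'}), the Frobenius inner product ⟨PAᵀ, BQᵀ⟩ is maximized by taking P and Q to be the transposes of the matrices formed by the first d' left and right singular vectors, respectively, of AᵀB (singular values in non-increasing order). The maximal value equals σ₁ + ... + σ_{d'}, the sum of the d' largest singular values of AᵀB. -/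
/-!
Put `X = P U` and `Y = Q V`; these again have orthonormal rows, and the objective becomes
`tr (X D Yᵀ) = ∑ₜ σₜ ⟪xₜ, yₜ⟫` for the columns `xₜ`, `yₜ` of `X`, `Y`, where `D` is the
rectangular diagonal matrix of singular values. Since `2 ⟪x, y⟫ ≤ ‖x‖² + ‖y‖²`, it is at most the
mean of `∑ₜ σₜ ‖xₜ‖²` and `∑ₜ σₜ ‖yₜ‖²`. The weights `‖xₜ‖²` form the diagonal of the orthogonal
projection `XᵀX`, so they lie in `[0, 1]` and add up to `d'`; against a nonincreasing nonnegative
`σ` such weights do best when they sit on the first `d'` indices, giving `σ₀ + ⋯ + σ_{d'-1}`.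
Taking for `P`, `Q` the first `d'` singular vectors puts them exactly there.
-/

open Matrix BigOperators Finset

lemma sum_fin_ite_val_lt {m k : ℕ} (hk : k ≤ m) (f : ℕ → ℝ) :
    ∑ i : Fin m, (if (i : ℕ) < k then f i else 0) = ∑ t ∈ range k, f t := by
  rw [Fin.sum_univ_eq_sum_range (fun t => if t < k then f t else 0), ← sum_filter]
  congr 1
  ext t
  simp only [mem_filter, mem_range]
  omega

theorem Antitone.sum_mul_le_sum_range {σ : ℕ → ℝ} (hσ : Antitone σ) {m k : ℕ} (hk : k ≤ m)
    (hσk : 0 ≤ σ k) {w : Fin m → ℝ} (hw0 : ∀ i, 0 ≤ w i) (hw1 : ∀ i, w i ≤ 1)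
    (hw : ∑ i, w i ≤ k) :
    ∑ i : Fin m, σ i * w i ≤ ∑ t ∈ range k, σ t := by
  set e : Fin m → ℝ := fun i => if (i : ℕ) < k then 1 else 0
  have hσe : ∑ i : Fin m, σ i * e i = ∑ t ∈ range k, σ t := by
    rw [← sum_fin_ite_val_lt hk]
    exact sum_congr rfl fun i _ => by simp only [e, mul_ite, mul_one, mul_zero]
  have he : ∑ i, e i = k := (sum_fin_ite_val_lt hk fun _ => 1).trans (by simp)
  have hterm : ∀ i : Fin m, (σ i - σ k) * (w i - e i) ≤ 0 := fun i => by
    by_cases hi : (i : ℕ) < k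
    · simp only [e, if_pos hi]
      exact mul_nonpos_of_nonneg_of_nonpos (sub_nonneg.2 (hσ hi.le)) (by linarith [hw1 i])
    · simp only [e, if_neg hi, sub_zero]
      exact mul_nonpos_of_nonpos_of_nonneg (sub_nonpos.2 (hσ (not_lt.1 hi))) (hw0 i)
  have hsplit : ∑ i : Fin m, σ i * w i - ∑ i : Fin m, σ i * e i =
      ∑ i : Fin m, (σ i - σ k) * (w i - e i) + σ k * (∑ i, w i - ∑ i, e i) := by
    simp only [mul_sub, sub_mul, sum_sub_distrib, mul_sum]
    ring
  have := sum_nonpos fun i (_ : i ∈ univ) => hterm i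
  nlinarith

lemma sum_fin_ite_eq_val_le {n : ℕ} (a : ℕ) {c : ℝ} (hc : 0 ≤ c) :
    ∑ j : Fin n, (if a = (j : ℕ) then c else 0) ≤ c := by
  rw [Fin.sum_univ_eq_sum_range (fun t => if a = t then c else 0), sum_ite_eq]
  split_ifs <;> simp [hc]

namespace Matrix

variable {κ m n : Type*} [Fintype κ]

lemma diag_transpose_mul_self_nonneg (X : Matrix κ m ℝ) (i : m) : 0 ≤ (Xᵀ * X) i i := by
  simp only [mul_apply, transpose_apply]
  exact sum_nonneg fun k _ => mul_self_nonneg _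

lemma two_mul_transpose_mul_apply_le (X : Matrix κ m ℝ) (Y : Matrix κ n ℝ) (i : m) (j : n) :
    2 * (Xᵀ * Y) i j ≤ (Xᵀ * X) i i + (Yᵀ * Y) j j := by
  simp only [mul_apply, transpose_apply, mul_sum, ← sum_add_distrib]
  exact sum_le_sum fun k _ => by nlinarith [sq_nonneg (X k i - Y k j)]

variable [Fintype m] [Fintype n]

lemma trace_mul_mul_transpose (X : Matrix κ m ℝ) (D : Matrix m n ℝ) (Y : Matrix κ n ℝ) :
    trace (X * D * Yᵀ) = ∑ i, ∑ j, D i j * (Xᵀ * Y) i j := by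
  simp only [trace, diag, mul_apply, transpose_apply, sum_mul, mul_sum]
  conv_rhs => rw [Finset.sum_comm]
  rw [Finset.sum_comm]
  refine Finset.sum_congr rfl fun j _ => ?_
  rw [Finset.sum_comm]
  exact sum_congr rfl fun i _ => sum_congr rfl fun k _ => by ring

lemma two_mul_trace_mul_mul_transpose_le (X : Matrix κ m ℝ) (Y : Matrix κ n ℝ)
    {D : Matrix m n ℝ} (hD : ∀ i j, 0 ≤ D i j) :
    2 * trace (X * D * Yᵀ) ≤
      ∑ i, (∑ j, D i j) * (Xᵀ * X) i i + ∑ j, (∑ i, D i j) * (Yᵀ * Y) j j := by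
  calc 2 * trace (X * D * Yᵀ)
      = ∑ i, ∑ j, D i j * (2 * (Xᵀ * Y) i j) := by
        rw [trace_mul_mul_transpose, mul_sum]
        exact sum_congr rfl fun i _ => by rw [mul_sum]; exact sum_congr rfl fun j _ => by ring
    _ ≤ ∑ i, ∑ j, D i j * ((Xᵀ * X) i i + (Yᵀ * Y) j j) :=
        sum_le_sum fun i _ => sum_le_sum fun j _ =>
          mul_le_mul_of_nonneg_left (two_mul_transpose_mul_apply_le X Y i j) (hD i j)
    _ = _ := by
        simp only [mul_add, sum_add_distrib, sum_mul]
        rw [sum_comm (f := fun i j => D i j * (Yᵀ * Y) j j)]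

variable [DecidableEq κ]

lemma diag_transpose_mul_self_le_one {X : Matrix κ m ℝ} (hX : X * Xᵀ = 1) (i : m) :
    (Xᵀ * X) i i ≤ 1 := by
  set M := Xᵀ * X
  have hidem : M * M = M := by
    rw [Matrix.mul_assoc, ← Matrix.mul_assoc X, hX, Matrix.one_mul]
  have hsymm : ∀ j, M j i = M i j := fun j => by
    rw [← transpose_apply M i j, transpose_mul, transpose_transpose]
  have hsq : M i i * M i i ≤ M i i :=
    calc M i i * M i i ≤ ∑ j, M i j * M i j :=
          single_le_sum (f := fun j => M i j * M i j) (fun j _ => mul_self_nonneg _) (mem_univ i)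
      _ = ∑ j, M i j * M j i := sum_congr rfl fun j _ => by rw [hsymm]
      _ = M i i := by rw [← mul_apply, hidem]
  nlinarith

lemma sum_diag_transpose_mul_self {X : Matrix κ m ℝ} (hX : X * Xᵀ = 1) :
    ∑ i, (Xᵀ * X) i i = Fintype.card κ :=
  calc ∑ i, (Xᵀ * X) i i = trace (Xᵀ * X) := rfl
    _ = _ := by rw [trace_mul_comm, hX, trace_one]

def rectDiagonal {α : Type*} [Zero α] {m n : ℕ} (σ : ℕ → α) : Matrix (Fin m) (Fin n) α :=
  of fun i j => if (i : ℕ) = (j : ℕ) then σ i else 0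

lemma rectDiagonal_apply {α : Type*} [Zero α] {m n : ℕ} (σ : ℕ → α) (i : Fin m) (j : Fin n) :
    rectDiagonal σ i j = if (i : ℕ) = (j : ℕ) then σ i else 0 :=
  rfl

lemma rectDiagonal_nonneg {m n : ℕ} {σ : ℕ → ℝ} (hσ : ∀ i, 0 ≤ σ i) (i : Fin m) (j : Fin n) :
    0 ≤ rectDiagonal σ i j := by
  rw [rectDiagonal_apply]
  split_ifs
  exacts [hσ i, le_rfl]

lemma sum_rectDiagonal_row_le {m n : ℕ} {σ : ℕ → ℝ} (hσ : ∀ i, 0 ≤ σ i) (i : Fin m) :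
    ∑ j : Fin n, rectDiagonal σ i j ≤ σ i :=
  sum_fin_ite_eq_val_le i (hσ i)

lemma sum_rectDiagonal_col_le {m n : ℕ} {σ : ℕ → ℝ} (hσ : ∀ i, 0 ≤ σ i) (j : Fin n) :
    ∑ i : Fin m, rectDiagonal σ i j ≤ σ j := by
  calc ∑ i : Fin m, rectDiagonal σ i j = ∑ i : Fin m, if (j : ℕ) = (i : ℕ) then σ j else 0 :=
        sum_congr rfl fun i _ => by
          by_cases h : (i : ℕ) = j
          · simp [rectDiagonal_apply, h]
          · simp [rectDiagonal_apply, h, Ne.symm h]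
    _ ≤ σ j := sum_fin_ite_eq_val_le j (hσ j)

theorem sum_mul_diag_transpose_mul_self_le {k m : ℕ} (hkm : k ≤ m) {σ : ℕ → ℝ}
    (hσ : Antitone σ) (hσ0 : ∀ i, 0 ≤ σ i) {X : Matrix (Fin k) (Fin m) ℝ} (hX : X * Xᵀ = 1) :
    ∑ i : Fin m, σ i * (Xᵀ * X) i i ≤ ∑ t ∈ range k, σ t :=
  hσ.sum_mul_le_sum_range hkm (hσ0 k) (diag_transpose_mul_self_nonneg X)
    (diag_transpose_mul_self_le_one hX) (by simp [sum_diag_transpose_mul_self hX])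

theorem trace_mul_rectDiagonal_mul_transpose_le {k m n : ℕ} (hkm : k ≤ m) (hkn : k ≤ n)
    {σ : ℕ → ℝ} (hσ : Antitone σ) (hσ0 : ∀ i, 0 ≤ σ i)
    {X : Matrix (Fin k) (Fin m) ℝ} {Y : Matrix (Fin k) (Fin n) ℝ}
    (hX : X * Xᵀ = 1) (hY : Y * Yᵀ = 1) :
    trace (X * (rectDiagonal σ : Matrix (Fin m) (Fin n) ℝ) * Yᵀ) ≤ ∑ t ∈ range k, σ t := by
  have hXY := two_mul_trace_mul_mul_transpose_le X Y (rectDiagonal_nonneg hσ0)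
  have hrow : ∑ i : Fin m, (∑ j : Fin n, rectDiagonal σ i j) * (Xᵀ * X) i i ≤
      ∑ i : Fin m, σ i * (Xᵀ * X) i i :=
    sum_le_sum fun i _ => mul_le_mul_of_nonneg_right (sum_rectDiagonal_row_le hσ0 i)
      (diag_transpose_mul_self_nonneg X i)
  have hcol : ∑ j : Fin n, (∑ i : Fin m, rectDiagonal σ i j) * (Yᵀ * Y) j j ≤
      ∑ j : Fin n, σ j * (Yᵀ * Y) j j :=
    sum_le_sum fun j _ => mul_le_mul_of_nonneg_right (sum_rectDiagonal_col_le hσ0 j)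
      (diag_transpose_mul_self_nonneg Y j)
  linarith [sum_mul_diag_transpose_mul_self_le hkm hσ hσ0 hX,
    sum_mul_diag_transpose_mul_self_le hkn hσ hσ0 hY]

lemma trace_rectDiagonal_submatrix_castLE {k m n : ℕ} (hkm : k ≤ m) (hkn : k ≤ n)
    (σ : ℕ → ℝ) :
    trace ((rectDiagonal σ).submatrix (Fin.castLE hkm) (Fin.castLE hkn)) =
      ∑ t ∈ range k, σ t := by
  simp [trace, rectDiagonal_apply, Fin.sum_univ_eq_sum_range σ]

variable {k l m n : Type*}

lemma mul_mul_transpose_eq_one_of_mul_transpose_eq_one [Fintype m] [DecidableEq l]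
    [DecidableEq m] {P : Matrix l m ℝ} {U : Matrix m m ℝ} (hP : P * Pᵀ = 1) (hU : U * Uᵀ = 1) :
    (P * U) * (P * U)ᵀ = 1 := by
  rw [transpose_mul, Matrix.mul_assoc, ← Matrix.mul_assoc U, hU, Matrix.one_mul, hP]

lemma submatrix_mul_transpose_submatrix_eq_one [Fintype n] [DecidableEq l] [DecidableEq m]
    {W : Matrix m n ℝ} (hW : W * Wᵀ = 1) {e : l → m} (he : Function.Injective e) :
    W.submatrix e id * (W.submatrix e id)ᵀ = 1 := by
  rw [transpose_submatrix, ← submatrix_mul _ _ _ _ _ Function.bijective_id, hW,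
    submatrix_one e he]

lemma submatrix_mul_mul_transpose_submatrix [Fintype m] [Fintype n] (U : Matrix m m ℝ)
    (M : Matrix m n ℝ) (V : Matrix n n ℝ) (e : l → m) (f : k → n) :
    Uᵀ.submatrix e id * M * (Vᵀ.submatrix f id)ᵀ = (Uᵀ * M * V).submatrix e f := by
  rw [transpose_submatrix, transpose_transpose, submatrix_mul _ _ e id f Function.bijective_id,
    submatrix_mul _ _ e id id Function.bijective_id, submatrix_id_id]

end Matrix

/-- Two-sided orthogonal Procrustes: among `P, Q` with orthonormal rows, the Frobenius inner
product `⟨P Aᵀ, B Qᵀ⟩` is maximized by the transposes of the first `d'` left and right singular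
vectors of `AᵀB`, with maximal value the sum of the `d'` largest singular values. -/
theorem procrustes_two_sided {n da db d' : ℕ} (hd'a : d' ≤ da) (hd'b : d' ≤ db)
    (A : Matrix (Fin n) (Fin da) ℝ) (B : Matrix (Fin n) (Fin db) ℝ)
    (U : Matrix (Fin da) (Fin da) ℝ) (V : Matrix (Fin db) (Fin db) ℝ)
    (σ : ℕ → ℝ)
    (hU : U * Uᵀ = 1) (hU' : Uᵀ * U = 1)
    (hV : V * Vᵀ = 1) (hV' : Vᵀ * V = 1)
    (hσ_nonneg : ∀ i, 0 ≤ σ i)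
    (hσ_anti : ∀ i j : ℕ, i ≤ j → σ j ≤ σ i)
    (hSVD : Aᵀ * B =
      U * (Matrix.of fun (i : Fin da) (j : Fin db) =>
        if (i : ℕ) = (j : ℕ) then σ (i : ℕ) else 0) * Vᵀ) :
    (∀ (P : Matrix (Fin d') (Fin da) ℝ) (Q : Matrix (Fin d') (Fin db) ℝ),
        P * Pᵀ = 1 → Q * Qᵀ = 1 →
        ((A * Pᵀ)ᵀ * (B * Qᵀ)).trace ≤ ∑ i ∈ Finset.range d', σ i) ∧
    (let P₀ : Matrix (Fin d') (Fin da) ℝ := Matrix.of fun i j => U j (Fin.castLE hd'a i)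
     let Q₀ : Matrix (Fin d') (Fin db) ℝ := Matrix.of fun i j => V j (Fin.castLE hd'b i)
     P₀ * P₀ᵀ = 1 ∧ Q₀ * Q₀ᵀ = 1 ∧
       ((A * P₀ᵀ)ᵀ * (B * Q₀ᵀ)).trace = ∑ i ∈ Finset.range d', σ i) := by
  let D : Matrix (Fin da) (Fin db) ℝ := rectDiagonal σ
  replace hSVD : Aᵀ * B = U * D * Vᵀ := hSVD
  have hobjective : ∀ (P : Matrix (Fin d') (Fin da) ℝ) (Q : Matrix (Fin d') (Fin db) ℝ),
      (A * Pᵀ)ᵀ * (B * Qᵀ) = P * (Aᵀ * B) * Qᵀ := fun P Q => by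
    rw [transpose_mul, transpose_transpose, Matrix.mul_assoc, Matrix.mul_assoc,
      Matrix.mul_assoc]
  refine ⟨fun P Q hP hQ => ?_, ?_⟩
  · have hPQ : (A * Pᵀ)ᵀ * (B * Qᵀ) = (P * U) * D * (Q * V)ᵀ := by
      rw [hobjective, hSVD]
      simp only [transpose_mul, Matrix.mul_assoc]
    rw [hPQ]
    exact trace_mul_rectDiagonal_mul_transpose_le hd'a hd'b hσ_anti hσ_nonneg
      (mul_mul_transpose_eq_one_of_mul_transpose_eq_one hP hU)
      (mul_mul_transpose_eq_one_of_mul_transpose_eq_one hQ hV)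
  · intro P₀ Q₀
    have hP₀ : P₀ = Uᵀ.submatrix (Fin.castLE hd'a) id := rfl
    have hQ₀ : Q₀ = Vᵀ.submatrix (Fin.castLE hd'b) id := rfl
    refine ⟨?_, ?_, ?_⟩
    · rw [hP₀]
      exact submatrix_mul_transpose_submatrix_eq_one (by rwa [transpose_transpose])
        (Fin.castLE_injective hd'a)
    · rw [hQ₀]
      exact submatrix_mul_transpose_submatrix_eq_one (by rwa [transpose_transpose])
        (Fin.castLE_injective hd'b)
    · rw [hobjective, hSVD, hP₀, hQ₀, submatrix_mul_mul_transpose_submatrix]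
      simp only [← Matrix.mul_assoc, hU', Matrix.one_mul]
      rw [Matrix.mul_assoc, hV', Matrix.mul_one]
      exact trace_rectDiagonal_submatrix_castLE hd'a hd'b σ
end

section
/- Fix a doubly stochastic matrix T ∈ Π_n with strictly positive entries. The map K ↦ KL(T ‖ OT_ε(K)) has gradient (OT_ε(K) − T)/ε, where OT_ε(K) is the entropic optimal transport plan with regularization ε > 0 and KL(T‖P) = Σ_{ij} T_{ij} log(T_{ij}/P_{ij}). -/
/-!
Write `P = OT_ε(K)` and `P₀ = OT_ε(K₀)`. By the dual form,
`log P - log P₀ = (u - u₀)𝟙ᵀ + (K - K₀)/ε + 𝟙(v - v₀)ᵀ`, and a difference of two doubly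
stochastic matrices is orthogonal to every matrix `a𝟙ᵀ + 𝟙bᵀ`. Hence the remainder of the
first-order expansion of `K ↦ KL(T ‖ OT_ε(K))` at `K₀` is exactly `KL(P₀ ‖ P) ≥ 0`, and
`KL(P ‖ P₀) + KL(P₀ ‖ P) = ⟨P - P₀, K - K₀⟩/ε`. As the entries of `P, P₀` lie in `(0, 1]`, this
symmetrised divergence dominates `‖P - P₀‖₂²`, and AM-GM turns that into
`⟨P - P₀, K - K₀⟩ ≤ ‖K - K₀‖₂²/ε`. So the remainder is `O(‖K - K₀‖²)`.
-/

open BigOperators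

attribute [local instance] Matrix.normedAddCommGroup Matrix.normedSpace

/-- A matrix is doubly stochastic: nonnegative entries, row and column sums all equal to 1. -/
def DoublyStoch {n : ℕ} (T : Matrix (Fin n) (Fin n) ℝ) : Prop :=
  (∀ i j, 0 ≤ T i j) ∧ (∀ i, ∑ j, T i j = 1) ∧ (∀ j, ∑ i, T i j = 1)

open Finset

theorem sub_le_mul_log_sub_log {a b : ℝ} (ha : 0 < a) (hb : 0 < b) :
    a - b ≤ a * (Real.log a - Real.log b) := by
  have h := Real.one_sub_inv_le_log_of_pos (div_pos ha hb)
  rw [Real.log_div ha.ne' hb.ne', inv_div] at h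
  calc a - b = a * (1 - b / a) := by field_simp
    _ ≤ a * (Real.log a - Real.log b) := mul_le_mul_of_nonneg_left h ha.le

theorem sq_sub_le_sub_mul_log_sub_log {a b : ℝ} (ha : 0 < a) (ha1 : a ≤ 1) (hb : 0 < b)
    (hb1 : b ≤ 1) : (a - b) ^ 2 ≤ (a - b) * (Real.log a - Real.log b) := by
  wlog hba : b ≤ a generalizing a b
  · calc (a - b) ^ 2 = (b - a) ^ 2 := by ring
      _ ≤ (b - a) * (Real.log b - Real.log a) := this hb hb1 ha ha1 (le_of_not_ge hba)
      _ = (a - b) * (Real.log a - Real.log b) := by ring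
  have hlog : 0 ≤ Real.log a - Real.log b := sub_nonneg.2 (Real.log_le_log hb hba)
  calc (a - b) ^ 2 = (a - b) * (a - b) := sq _
    _ ≤ (a - b) * (a * (Real.log a - Real.log b)) :=
      mul_le_mul_of_nonneg_left (sub_le_mul_log_sub_log ha hb) (sub_nonneg.2 hba)
    _ ≤ (a - b) * (Real.log a - Real.log b) :=
      mul_le_mul_of_nonneg_left (mul_le_of_le_one_left hlog ha1) (sub_nonneg.2 hba)

theorem mul_log_div_sub_mul_log_div (t : ℝ) {p q : ℝ} (hp : p ≠ 0) (hq : q ≠ 0) :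
    t * Real.log (t / p) - t * Real.log (t / q) = t * (Real.log q - Real.log p) := by
  rcases eq_or_ne t 0 with rfl | ht
  · simp
  · rw [Real.log_div ht hp, Real.log_div ht hq]
    ring

theorem hasFDerivAt_of_norm_sub_sub_le_mul_sq {𝕜 E F : Type*} [NontriviallyNormedField 𝕜]
    [NormedAddCommGroup E] [NormedSpace 𝕜 E] [NormedAddCommGroup F] [NormedSpace 𝕜 F]
    {f : E → F} {f' : E →L[𝕜] F} {x₀ : E} (C : ℝ)
    (h : ∀ x, ‖f x - f x₀ - f' (x - x₀)‖ ≤ C * ‖x - x₀‖ ^ 2) : HasFDerivAt f f' x₀ := by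
  refine HasFDerivAt.of_isLittleO <|
    (Asymptotics.IsBigO.of_bound C (Filter.Eventually.of_forall fun x => ?_)).trans_isLittleO
      (Asymptotics.isLittleO_pow_sub_sub x₀ one_lt_two)
  simpa only [norm_pow, norm_norm] using h x

theorem DoublyStoch.le_one {n : ℕ} {P : Matrix (Fin n) (Fin n) ℝ} (hP : DoublyStoch P)
    (i j : Fin n) : P i j ≤ 1 :=
  hP.2.1 i ▸ single_le_sum (fun k _ => hP.1 i k) (mem_univ j)

namespace Matrix

variable {m n : Type*} [Fintype m] [Fintype n]

theorem sum_sq_le_card_mul_norm_sq (M : Matrix m n ℝ) :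
    ∑ i, ∑ j, M i j ^ 2 ≤ (Fintype.card m * Fintype.card n : ℝ) * ‖M‖ ^ 2 := by
  have hentry : ∀ i j, M i j ^ 2 ≤ ‖M‖ ^ 2 := fun i j => by
    rw [← sq_abs]
    exact pow_le_pow_left₀ (abs_nonneg _) (norm_entry_le_entrywise_sup_norm M) 2
  calc ∑ i, ∑ j, M i j ^ 2 ≤ ∑ _i : m, ∑ _j : n, ‖M‖ ^ 2 :=
        sum_le_sum fun i _ => sum_le_sum fun j _ => hentry i j
    _ = (Fintype.card m * Fintype.card n : ℝ) * ‖M‖ ^ 2 := by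
        simp only [sum_const, card_univ, nsmul_eq_mul]
        ring

theorem sum_mul_add_add_eq_of_sum_eq_zero {D : Matrix m n ℝ} (hrow : ∀ i, ∑ j, D i j = 0)
    (hcol : ∀ j, ∑ i, D i j = 0) (a : m → ℝ) (Y : Matrix m n ℝ) (b : n → ℝ) :
    ∑ i, ∑ j, D i j * (a i + Y i j + b j) = ∑ i, ∑ j, D i j * Y i j := by
  have ha : ∑ i, ∑ j, D i j * a i = 0 := by simp [← sum_mul, hrow]
  have hb : ∑ i, ∑ j, D i j * b j = 0 := by
    rw [sum_comm]
    simp [← sum_mul, hcol]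
  simp only [mul_add, sum_add_distrib, ha, hb, zero_add, add_zero]

/-- The dual form `log P = u𝟙ᵀ + K/ε + 𝟙vᵀ` of an entropic optimal transport plan. -/
def IsGibbsScaling (ε : ℝ) (K P : Matrix m n ℝ) : Prop :=
  ∃ (u : m → ℝ) (v : n → ℝ), ∀ i j, Real.log (P i j) = u i + K i j / ε + v j

theorem IsGibbsScaling.sum_sub_mul_log_sub_log {ε : ℝ} {K K' P P' : Matrix m n ℝ}
    (hP : IsGibbsScaling ε K P) (hP' : IsGibbsScaling ε K' P') {A B : Matrix m n ℝ}
    (hrow : ∀ i, ∑ j, A i j = ∑ j, B i j) (hcol : ∀ j, ∑ i, A i j = ∑ i, B i j) :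
    ∑ i, ∑ j, (A i j - B i j) * (Real.log (P i j) - Real.log (P' i j)) =
      (∑ i, ∑ j, (A i j - B i j) * (K i j - K' i j)) / ε := by
  obtain ⟨u, v, hP⟩ := hP
  obtain ⟨u', v', hP'⟩ := hP'
  have hlog : ∀ i j, Real.log (P i j) - Real.log (P' i j) =
      (u i - u' i) + (K i j - K' i j) / ε + (v j - v' j) := fun i j => by
    rw [hP, hP']
    ring
  have hzero := sum_mul_add_add_eq_of_sum_eq_zero (D := A - B)
    (by simp [sum_sub_distrib, hrow]) (by simp [sum_sub_distrib, hcol])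
    (u - u') (of fun i j => (K i j - K' i j) / ε) (v - v')
  simp only [sub_apply, Pi.sub_apply, of_apply] at hzero
  simp only [hlog, hzero, sum_div, mul_div_assoc]

noncomputable def klDiv (P Q : Matrix m n ℝ) : ℝ :=
  ∑ i, ∑ j, P i j * (Real.log (P i j) - Real.log (Q i j))

theorem klDiv_nonneg {P Q : Matrix m n ℝ} (hP : ∀ i j, 0 < P i j) (hQ : ∀ i j, 0 < Q i j)
    (hmass : ∑ i, ∑ j, P i j = ∑ i, ∑ j, Q i j) : 0 ≤ P.klDiv Q :=
  calc 0 = ∑ i, ∑ j, (P i j - Q i j) := by simp [sum_sub_distrib, hmass]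
    _ ≤ P.klDiv Q := sum_le_sum fun i _ => sum_le_sum fun j _ =>
      sub_le_mul_log_sub_log (hP i j) (hQ i j)

theorem klDiv_add_klDiv (P Q : Matrix m n ℝ) :
    P.klDiv Q + Q.klDiv P =
      ∑ i, ∑ j, (P i j - Q i j) * (Real.log (P i j) - Real.log (Q i j)) := by
  simp only [klDiv, ← sum_add_distrib]
  exact sum_congr rfl fun i _ => sum_congr rfl fun j _ => by ring

theorem sum_sq_sub_le_klDiv_add_klDiv {P Q : Matrix m n ℝ} (hP : ∀ i j, 0 < P i j)
    (hP1 : ∀ i j, P i j ≤ 1) (hQ : ∀ i j, 0 < Q i j) (hQ1 : ∀ i j, Q i j ≤ 1) :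
    ∑ i, ∑ j, (P i j - Q i j) ^ 2 ≤ P.klDiv Q + Q.klDiv P := by
  rw [klDiv_add_klDiv]
  exact sum_le_sum fun i _ => sum_le_sum fun j _ =>
    sq_sub_le_sub_mul_log_sub_log (hP i j) (hP1 i j) (hQ i j) (hQ1 i j)

end Matrix

open Matrix

section

variable {n : ℕ} {ε : ℝ}

theorem klDiv_le_sum_sq_div_sq (hε : 0 < ε) {K K' P P' : Matrix (Fin n) (Fin n) ℝ}
    (hP : DoublyStoch P) (hP' : DoublyStoch P') (hPpos : ∀ i j, 0 < P i j)
    (hP'pos : ∀ i j, 0 < P' i j) (hK : IsGibbsScaling ε K P) (hK' : IsGibbsScaling ε K' P') :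
    P'.klDiv P ≤ (∑ i, ∑ j, (K i j - K' i j) ^ 2) / ε ^ 2 := by
  set X := ∑ i, ∑ j, (P i j - P' i j) * (K i j - K' i j)
  set H := ∑ i, ∑ j, (K i j - K' i j) ^ 2
  have hsym : P.klDiv P' + P'.klDiv P = X / ε := by
    rw [klDiv_add_klDiv]
    exact hK.sum_sub_mul_log_sub_log hK' (fun i => (hP.2.1 i).trans (hP'.2.1 i).symm)
      (fun j => (hP.2.2 j).trans (hP'.2.2 j).symm)
  have hsq : ∑ i, ∑ j, (P i j - P' i j) ^ 2 ≤ X / ε :=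
    hsym ▸ sum_sq_sub_le_klDiv_add_klDiv hPpos hP.le_one hP'pos hP'.le_one
  have amgm : ∀ x y : ℝ, x * y ≤ ε / 2 * x ^ 2 + y ^ 2 / (2 * ε) := fun x y => by
    have h : ε / 2 * x ^ 2 + y ^ 2 / (2 * ε) - x * y = (ε * x - y) ^ 2 / (2 * ε) := by
      field_simp
      ring
    rw [← sub_nonneg, h]
    positivity
  have hX_amgm : X ≤ ε / 2 * ∑ i, ∑ j, (P i j - P' i j) ^ 2 + H / (2 * ε) :=
    calc X ≤ ∑ i, ∑ j, (ε / 2 * (P i j - P' i j) ^ 2 + (K i j - K' i j) ^ 2 / (2 * ε)) :=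
          sum_le_sum fun i _ => sum_le_sum fun j _ => amgm _ _
      _ = ε / 2 * ∑ i, ∑ j, (P i j - P' i j) ^ 2 + H / (2 * ε) := by
          simp only [sum_add_distrib, mul_sum, sum_div, H]
  have hX : X ≤ H / ε := by
    have h := mul_le_mul_of_nonneg_left hsq (by positivity : (0 : ℝ) ≤ ε / 2)
    have e1 : ε / 2 * (X / ε) = X / 2 := by field_simp
    have e2 : H / (2 * ε) = H / ε / 2 := by ring
    linarith
  have hKL_nonneg := klDiv_nonneg hPpos hP'pos (by simp [hP.2.1, hP'.2.1])
  calc P'.klDiv P ≤ X / ε := by linarith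
    _ ≤ H / ε / ε := div_le_div_of_nonneg_right hX hε.le
    _ = H / ε ^ 2 := by ring

theorem sum_mul_log_div_sub_sub_eq_klDiv {T K K₀ P P₀ : Matrix (Fin n) (Fin n) ℝ}
    (hT : DoublyStoch T) (hP₀ : DoublyStoch P₀) (hPpos : ∀ i j, 0 < P i j)
    (hP₀pos : ∀ i j, 0 < P₀ i j) (hK : IsGibbsScaling ε K P) (hK₀ : IsGibbsScaling ε K₀ P₀) :
    ∑ i, ∑ j, T i j * Real.log (T i j / P i j) - ∑ i, ∑ j, T i j * Real.log (T i j / P₀ i j)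
      - 1 / ε * ∑ i, ∑ j, (P₀ i j - T i j) * (K i j - K₀ i j) = P₀.klDiv P := by
  rw [one_div_mul_eq_div, ← hK.sum_sub_mul_log_sub_log hK₀
    (fun i => (hP₀.2.1 i).trans (hT.2.1 i).symm) (fun j => (hP₀.2.2 j).trans (hT.2.2 j).symm)]
  simp only [klDiv, ← sum_sub_distrib]
  refine sum_congr rfl fun i _ => sum_congr rfl fun j _ => ?_
  rw [mul_log_div_sub_mul_log_div _ (hPpos i j).ne' (hP₀pos i j).ne']
  ring

end

theorem gradient_KL_entropic_OT_general {n : ℕ} (ε : ℝ) (hε : 0 < ε)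
    (T : Matrix (Fin n) (Fin n) ℝ) (hT : DoublyStoch T)
    (OT : Matrix (Fin n) (Fin n) ℝ → Matrix (Fin n) (Fin n) ℝ)
    (hOT_DS : ∀ K, DoublyStoch (OT K))
    (hOT_pos : ∀ K i j, 0 < OT K i j)
    (hOT_dual : ∀ K, ∃ u v : Fin n → ℝ,
      ∀ i j, Real.log (OT K i j) = u i + K i j / ε + v j)
    (K₀ : Matrix (Fin n) (Fin n) ℝ) :
    ∃ f' : Matrix (Fin n) (Fin n) ℝ →L[ℝ] ℝ,
      (∀ M : Matrix (Fin n) (Fin n) ℝ,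
        f' M = (1 / ε) * ∑ i, ∑ j, (OT K₀ i j - T i j) * M i j) ∧
      HasFDerivAt
        (fun K => ∑ i, ∑ j, T i j * Real.log (T i j / OT K i j)) f' K₀ := by
  let f' : Matrix (Fin n) (Fin n) ℝ →L[ℝ] ℝ := LinearMap.toContinuousLinearMap
    ((1 / ε) • ∑ i, ∑ j, (OT K₀ i j - T i j) • entryLinearMap ℝ ℝ i j)
  have hf' : ∀ M, f' M = (1 / ε) * ∑ i, ∑ j, (OT K₀ i j - T i j) * M i j := fun M => by
    simp [f']
  have hremainder : ∀ K, ∑ i, ∑ j, T i j * Real.log (T i j / OT K i j)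
      - ∑ i, ∑ j, T i j * Real.log (T i j / OT K₀ i j) - f' (K - K₀) = (OT K₀).klDiv (OT K) :=
    fun K => by
      rw [hf']
      exact sum_mul_log_div_sub_sub_eq_klDiv hT (hOT_DS K₀) (hOT_pos K) (hOT_pos K₀)
        (hOT_dual K) (hOT_dual K₀)
  refine ⟨f', hf', hasFDerivAt_of_norm_sub_sub_le_mul_sq (n * n / ε ^ 2) fun K => ?_⟩
  calc _ = (OT K₀).klDiv (OT K) := (congrArg norm (hremainder K)).trans <| Real.norm_of_nonneg <|
          klDiv_nonneg (hOT_pos K₀) (hOT_pos K) (by simp [(hOT_DS K₀).2.1, (hOT_DS K).2.1])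
    _ ≤ (∑ i, ∑ j, (K i j - K₀ i j) ^ 2) / ε ^ 2 :=
        klDiv_le_sum_sq_div_sq hε (hOT_DS K) (hOT_DS K₀) (hOT_pos K) (hOT_pos K₀)
          (hOT_dual K) (hOT_dual K₀)
    _ ≤ (n * n * ‖K - K₀‖ ^ 2) / ε ^ 2 := by
        gcongr
        simpa using sum_sq_le_card_mul_norm_sq (K - K₀)
    _ = n * n / ε ^ 2 * ‖K - K₀‖ ^ 2 := by ring

/-- For a fixed doubly stochastic `T` with positive entries, the map
`K ↦ KL(T ‖ OT_ε(K))` has gradient `(OT_ε(K) − T)/ε`: its Fréchet derivative at `K₀` is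
`M ↦ (1/ε)⟨OT_ε(K₀) − T, M⟩`. -/
theorem gradient_KL_entropic_OT {n : ℕ} (ε : ℝ) (hε : 0 < ε)
    (T : Matrix (Fin n) (Fin n) ℝ) (hT : DoublyStoch T) (hTpos : ∀ i j, 0 < T i j)
    (OT : Matrix (Fin n) (Fin n) ℝ → Matrix (Fin n) (Fin n) ℝ)
    (hOT_DS : ∀ K, DoublyStoch (OT K))
    (hOT_pos : ∀ K i j, 0 < OT K i j)
    (hOT_min : ∀ K P, DoublyStoch P →
      (-(∑ i, ∑ j, OT K i j * K i j) + ε * ∑ i, ∑ j, OT K i j * Real.log (OT K i j))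
        ≤ (-(∑ i, ∑ j, P i j * K i j) + ε * ∑ i, ∑ j, P i j * Real.log (P i j)))
    (hOT_dual : ∀ K, ∃ u v : Fin n → ℝ,
      ∀ i j, Real.log (OT K i j) = u i + K i j / ε + v j)
    (K₀ : Matrix (Fin n) (Fin n) ℝ) :
    ∃ f' : Matrix (Fin n) (Fin n) ℝ →L[ℝ] ℝ,
      (∀ M : Matrix (Fin n) (Fin n) ℝ,
        f' M = (1 / ε) * ∑ i, ∑ j, (OT K₀ i j - T i j) * M i j) ∧
      HasFDerivAt
        (fun K => ∑ i, ∑ j, T i j * Real.log (T i j / OT K i j)) f' K₀ :=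
  gradient_KL_entropic_OT_general ε hε T hT OT hOT_DS hOT_pos hOT_dual K₀
end

section
/- For T ∈ Π_n with positive entries, the function K ↦ KL(T ‖ OT_ε(K)) can be written as KL(T ‖ OT_ε(K)) = H(T) − (⟨T,K⟩ + W_ε(K))/ε, where W_ε(K) is the optimal value of the entropic OT problem. -/
open BigOperators

/-!
Since `log OT_ε(K) = u𝟙ᵀ + K/ε + 𝟙vᵀ` and doubly stochastic matrices have unit marginals,
`⟨S, log OT_ε(K)⟩ = ∑ u + ∑ v + ⟨S, K⟩/ε` for every `S ∈ Π_n`. Taking `S = OT_ε(K)` gives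
`W_ε(K) = ε (∑ u + ∑ v)`, hence `⟨T, log OT_ε(K)⟩ = (⟨T, K⟩ + W_ε(K))/ε`, and
`KL(T‖P) = H(T) − ⟨T, log P⟩`.
-/

namespace DoublyStoch

variable {n : ℕ} {S : Matrix (Fin n) (Fin n) ℝ}

theorem sum_sum_mul_left (hS : DoublyStoch S) (u : Fin n → ℝ) :
    ∑ i, ∑ j, S i j * u i = ∑ i, u i := by
  simp_rw [← Finset.sum_mul, hS.2.1, one_mul]

theorem sum_sum_mul_right (hS : DoublyStoch S) (v : Fin n → ℝ) :
    ∑ i, ∑ j, S i j * v j = ∑ j, v j := by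
  rw [Finset.sum_comm]
  simp_rw [← Finset.sum_mul, hS.2.2, one_mul]

theorem sum_sum_mul_add_div_add (hS : DoublyStoch S) (ε : ℝ) (u v : Fin n → ℝ)
    (K : Matrix (Fin n) (Fin n) ℝ) :
    ∑ i, ∑ j, S i j * (u i + K i j / ε + v j)
      = ∑ i, u i + ∑ j, v j + (∑ i, ∑ j, S i j * K i j) / ε := by
  simp only [mul_add, Finset.sum_add_distrib, hS.sum_sum_mul_left, hS.sum_sum_mul_right,
    Finset.sum_div, mul_div_assoc]
  ring

end DoublyStoch

theorem sum_sum_mul_log_div {n : ℕ} (T P : Matrix (Fin n) (Fin n) ℝ) (hP : ∀ i j, P i j ≠ 0) :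
    ∑ i, ∑ j, T i j * Real.log (T i j / P i j)
      = ∑ i, ∑ j, T i j * Real.log (T i j) - ∑ i, ∑ j, T i j * Real.log (P i j) := by
  simp only [← Finset.sum_sub_distrib, ← mul_sub]
  refine Finset.sum_congr rfl fun i _ => Finset.sum_congr rfl fun j _ => ?_
  rcases eq_or_ne (T i j) 0 with hT | hT
  · simp [hT]
  · rw [Real.log_div hT (hP i j)]

theorem sum_sum_mul_log_eq_div_of_dual {n : ℕ} {ε : ℝ} (hε : ε ≠ 0)
    {K P : Matrix (Fin n) (Fin n) ℝ} {u v : Fin n → ℝ} (hP : DoublyStoch P)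
    (hdual : ∀ i j, Real.log (P i j) = u i + K i j / ε + v j)
    {T : Matrix (Fin n) (Fin n) ℝ} (hT : DoublyStoch T) :
    ∑ i, ∑ j, T i j * Real.log (P i j)
      = ((∑ i, ∑ j, T i j * K i j)
          + (-(∑ i, ∑ j, P i j * K i j) + ε * ∑ i, ∑ j, P i j * Real.log (P i j))) / ε := by
  simp only [hdual, hP.sum_sum_mul_add_div_add, hT.sum_sum_mul_add_div_add]
  field_simp
  ring

theorem kl_eq_negentropy_sub_entropic_OT_general {n : ℕ} (ε : ℝ) (hε : 0 < ε)
    (K P : Matrix (Fin n) (Fin n) ℝ) (u v : Fin n → ℝ)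
    (hP : DoublyStoch P) (hPpos : ∀ i j, 0 < P i j)
    (hdual : ∀ i j, Real.log (P i j) = u i + K i j / ε + v j)
    (T : Matrix (Fin n) (Fin n) ℝ) (hT : DoublyStoch T) :
    let W : ℝ :=
      -(∑ i, ∑ j, P i j * K i j) + ε * ∑ i, ∑ j, P i j * Real.log (P i j)
    ∑ i, ∑ j, T i j * Real.log (T i j / P i j)
      = (∑ i, ∑ j, T i j * Real.log (T i j))
          - ((∑ i, ∑ j, T i j * K i j) + W) / ε := by
  rw [sum_sum_mul_log_div T P fun i j => (hPpos i j).ne',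
    sum_sum_mul_log_eq_div_of_dual hε.ne' hP hdual hT]

/-- If `P = OT_ε(K)` is the minimizer of the entropic OT objective over doubly stochastic
matrices with dual decomposition `log P = u𝟙ᵀ + K/ε + 𝟙vᵀ`, then for doubly stochastic `T`
with positive entries, `KL(T‖P) = H(T) − (⟨T,K⟩ + W_ε(K))/ε`. -/
theorem kl_eq_negentropy_sub_entropic_OT {n : ℕ} (ε : ℝ) (hε : 0 < ε)
    (K P : Matrix (Fin n) (Fin n) ℝ) (u v : Fin n → ℝ)
    (hP : DoublyStoch P) (hPpos : ∀ i j, 0 < P i j)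
    (hdual : ∀ i j, Real.log (P i j) = u i + K i j / ε + v j)
    (hmin : ∀ T, DoublyStoch T →
      (-(∑ i, ∑ j, P i j * K i j) + ε * ∑ i, ∑ j, P i j * Real.log (P i j))
        ≤ (-(∑ i, ∑ j, T i j * K i j) + ε * ∑ i, ∑ j, T i j * Real.log (T i j)))
    (T : Matrix (Fin n) (Fin n) ℝ) (hT : DoublyStoch T)
    (hTpos : ∀ i j, 0 < T i j) :
    let W : ℝ :=
      -(∑ i, ∑ j, P i j * K i j) + ε * ∑ i, ∑ j, P i j * Real.log (P i j)
    ∑ i, ∑ j, T i j * Real.log (T i j / P i j)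
      = (∑ i, ∑ j, T i j * Real.log (T i j))
          - ((∑ i, ∑ j, T i j * K i j) + W) / ε :=
  kl_eq_negentropy_sub_entropic_OT_general ε hε K P u v hP hPpos hdual T hT
end
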